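/- Soundness and completeness for CMABs: A formula φ ∈ L is derivable in the logic LDA if and only if φ is valid for the class of consistent multi-agent belief models (CMABs), i.e., (B,Cxt) ⊨ φ for every CMAB (B,Cxt). -/

import Mathlib

namespace LDAPaper

/-- Formulas over atomic propositions `ℕ` and agents `Agt`.
`expbel i α` is the explicit belief operator `△ᵢ α`; `impbel i φ` is the implicit
belief operator `□ᵢ φ`. -/
inductive Frm (Agt : Type) : Type
  | atom : ℕ → Frm Agt
  | neg : Frm Agt → Frm Agt
  | and : Frm Agt → Frm Agt → Frm Agt
  | expbel : Agt → Frm Agt → Frm Agt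
  | impbel : Agt → Frm Agt → Frm Agt

namespace Frm

variable {Agt : Type}

/-- Membership in the sublanguage `L0` (no implicit-belief operator). -/
def isL0 : Frm Agt → Prop
  | atom _ => True
  | neg α => isL0 α
  | and α β => isL0 α ∧ isL0 β
  | expbel _ α => isL0 α
  | impbel _ _ => False

/-- Membership in the language `L`: the explicit belief operator applies only to
`L0`-formulas. -/
def isL : Frm Agt → Prop
  | atom _ => True
  | neg φ => isL φ
  | and φ ψ => isL φ ∧ isL ψ
  | expbel _ α => isL0 α
  | impbel _ φ => isL φ

/-- Material implication, defined from `¬` and `∧` as usual. -/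
def imp (φ ψ : Frm Agt) : Frm Agt := neg (and φ (neg ψ))

/-- Disjunction, defined from `¬` and `∧` as usual. -/
def or (φ ψ : Frm Agt) : Frm Agt := neg (and (neg φ) (neg ψ))

/-- Biconditional, defined from `¬` and `∧` as usual. -/
def iff (φ ψ : Frm Agt) : Frm Agt := and (imp φ ψ) (imp ψ φ)

/-- The set of atomic propositions occurring in a formula. -/
def atomsOf : Frm Agt → Set ℕ
  | atom p => {p}
  | neg φ => atomsOf φ
  | and φ ψ => atomsOf φ ∪ atomsOf ψ
  | expbel _ φ => atomsOf φ
  | impbel _ φ => atomsOf φ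

end Frm

/-- A model `(W, D, N, V)`: worlds, doxastic function, notional function, valuation. -/
structure PreNDM (Agt : Type) where
  W : Type
  D : Agt → W → Set (Frm Agt)
  N : Agt → W → Set W
  V : ℕ → Set W

namespace PreNDM

variable {Agt : Type}

/-- Truth of a formula at a world of a model. -/
def sat (M : PreNDM Agt) : M.W → Frm Agt → Prop
  | w, .atom p => w ∈ M.V p
  | w, .neg φ => ¬ sat M w φ
  | w, .and φ ψ => sat M w φ ∧ sat M w ψ
  | w, .expbel i α => α ∈ M.D i w
  | w, .impbel i φ => ∀ v ∈ M.N i w, sat M v φ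

end PreNDM

/-- Quasi-notional doxastic model: belief bases consist of `L0`-formulas,
(C1*) `N(i,w) ⊆ ∩_{α ∈ D(i,w)} ‖α‖`, and (C2) `N(i,w) ≠ ∅`. -/
def isQNDM {Agt : Type} (M : PreNDM Agt) : Prop :=
  (∀ i w, ∀ α ∈ M.D i w, α.isL0) ∧
  (∀ i w, ∀ v ∈ M.N i w, ∀ α ∈ M.D i w, M.sat v α) ∧
  (∀ i w, (M.N i w).Nonempty)

/-- Notional doxastic model: belief bases consist of `L0`-formulas,
(C1) `N(i,w) = ∩_{α ∈ D(i,w)} ‖α‖`, and (C2) `N(i,w) ≠ ∅`. -/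
def isNDM {Agt : Type} (M : PreNDM Agt) : Prop :=
  (∀ i w, ∀ α ∈ M.D i w, α.isL0) ∧
  (∀ i w, M.N i w = {v | ∀ α ∈ M.D i w, M.sat v α}) ∧
  (∀ i w, (M.N i w).Nonempty)

/-- A model is finite iff `W` is finite and every `D(i,w)` and every
`{p ∈ Atm : w ∈ V(p)}` is finite. -/
def finiteModel {Agt : Type} (M : PreNDM Agt) : Prop :=
  Finite M.W ∧ (∀ i w, (M.D i w).Finite) ∧ (∀ w, {p : ℕ | w ∈ M.V p}.Finite)

end LDAPaper
namespace LDAPaper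

/-- A multi-agent belief base `B = (B_1,…,B_n, V)`. -/
structure MABase (Agt : Type) where
  B : Agt → Set (Frm Agt)
  V : Set ℕ

namespace MABase

variable {Agt : Type}

/-- Satisfaction of `L0`-formulas by a multi-agent belief base. -/
def bsat (b : MABase Agt) : Frm Agt → Prop
  | .atom p => p ∈ b.V
  | .neg α => ¬ bsat b α
  | .and α β => bsat b α ∧ bsat b β
  | .expbel i α => α ∈ b.B i
  | .impbel _ _ => True

/-- Well-formedness: each agent's belief base consists of `L0`-formulas. -/
def wf (b : MABase Agt) : Prop := ∀ i, ∀ α ∈ b.B i, α.isL0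

/-- Doxastic alternative relation: `b R_i b'` iff `b'` satisfies every formula in
agent `i`'s belief base in `b`. -/
def R (i : Agt) (b b' : MABase Agt) : Prop := ∀ α ∈ b.B i, bsat b' α

end MABase

/-- Satisfaction of `L`-formulas by a multi-agent belief model `(b, Cxt)`. -/
def msat {Agt : Type} (Cxt : Set (MABase Agt)) : MABase Agt → Frm Agt → Prop
  | b, .atom p => p ∈ b.V
  | b, .neg φ => ¬ msat Cxt b φ
  | b, .and φ ψ => msat Cxt b φ ∧ msat Cxt b ψ
  | b, .expbel i α => α ∈ b.B i
  | b, .impbel i φ => ∀ b' ∈ Cxt, MABase.R i b b' → msat Cxt b' φ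

/-- Consistent multi-agent belief model: all bases involved are well formed and
for every agent `i` and every `b' ∈ Cxt ∪ {b}` there is `b'' ∈ Cxt` with `b' R_i b''`. -/
def isCMAB {Agt : Type} (b : MABase Agt) (Cxt : Set (MABase Agt)) : Prop :=
  (∀ b' ∈ insert b Cxt, b'.wf) ∧
  (∀ i : Agt, ∀ b' ∈ insert b Cxt, ∃ b'' ∈ Cxt, MABase.R i b' b'')

/-- Boolean evaluation of a formula, treating atoms, explicit-belief formulas and
implicit-belief formulas as propositional atoms. -/
def boolEval {Agt : Type} (v : Frm Agt → Bool) : Frm Agt → Bool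
  | .neg φ => ! boolEval v φ
  | .and φ ψ => boolEval v φ && boolEval v ψ
  | φ => v φ

/-- Instances of classical propositional tautologies. -/
def Tautology {Agt : Type} (φ : Frm Agt) : Prop :=
  ∀ v : Frm Agt → Bool, boolEval v φ = true

/-- Derivability in the logic LDA: classical propositional logic over `L` plus
axioms K, D, Int and the necessitation rule for implicit belief. -/
inductive LDA {Agt : Type} : Frm Agt → Prop
  | taut {φ : Frm Agt} : φ.isL → Tautology φ → LDA φ
  | axK (i : Agt) {φ ψ : Frm Agt} : φ.isL → ψ.isL →
      LDA (((Frm.impbel i φ).and (Frm.impbel i (φ.imp ψ))).imp (Frm.impbel i ψ))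
  | axD (i : Agt) {φ : Frm Agt} : φ.isL →
      LDA (Frm.neg ((Frm.impbel i φ).and (Frm.impbel i (Frm.neg φ))))
  | axInt (i : Agt) {α : Frm Agt} : α.isL0 →
      LDA ((Frm.expbel i α).imp (Frm.impbel i α))
  | mp {φ ψ : Frm Agt} : LDA (φ.imp ψ) → LDA φ → LDA ψ
  | nec (i : Agt) {φ : Frm Agt} : LDA φ → LDA (Frm.impbel i φ)

/-- Conjunction of a list of formulas (the empty conjunction is a tautology). -/
def conjList {Agt : Type} : List (Frm Agt) → Frm Agt
  | [] => Frm.neg ((Frm.atom 0).and (Frm.neg (Frm.atom 0)))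
  | φ :: l => φ.and (conjList l)

/-- A set of formulas is LDA-consistent iff no contradiction is derivable in LDA
from finitely many of its members. -/
def Consistent {Agt : Type} (Δ : Set (Frm Agt)) : Prop :=
  ∀ l : List (Frm Agt), (∀ ψ ∈ l, ψ ∈ Δ) → ¬ LDA (Frm.neg (conjList l))

/-- Maximally LDA-consistent set of `L`-formulas. -/
def MCS {Agt : Type} (Γ : Set (Frm Agt)) : Prop :=
  (∀ φ ∈ Γ, φ.isL) ∧ Consistent Γ ∧
    ∀ Δ : Set (Frm Agt), (∀ φ ∈ Δ, φ.isL) → Consistent Δ → Γ ⊆ Δ → Δ = Γ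

/-- Canonical doxastic function: `α ∈ D^c(i,w)` iff `△ᵢα ∈ w`. -/
def canonD {Agt : Type} (i : Agt) (w : {Γ : Set (Frm Agt) // MCS Γ}) : Set (Frm Agt) :=
  {α | Frm.expbel i α ∈ w.val}

/-- Canonical notional function: `v ∈ N^c(i,w)` iff `□ᵢφ ∈ w` implies `φ ∈ v`. -/
def canonN {Agt : Type} (i : Agt) (w : {Γ : Set (Frm Agt) // MCS Γ}) :
    Set {Γ : Set (Frm Agt) // MCS Γ} :=
  {v | ∀ φ : Frm Agt, Frm.impbel i φ ∈ w.val → φ ∈ v.val}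

/-- Canonical valuation: `w ∈ V^c(p)` iff `p ∈ w`. -/
def canonV {Agt : Type} (p : ℕ) : Set {Γ : Set (Frm Agt) // MCS Γ} :=
  {w | Frm.atom p ∈ w.val}

/-- The canonical model of LDA: worlds are the maximally LDA-consistent sets. -/
def canonM (Agt : Type) : PreNDM Agt where
  W := {Γ : Set (Frm Agt) // MCS Γ}
  D := canonD
  N := canonN
  V := canonV

/-- `w ≡_Σ v` iff `w` and `v` satisfy the same formulas of `Σ`. -/
def filtRel {Agt : Type} (M : PreNDM Agt) (S : Set (Frm Agt)) (w v : M.W) : Prop :=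
  ∀ φ ∈ S, (M.sat w φ ↔ M.sat v φ)

/-- The setoid of `≡_Σ`-equivalent worlds. -/
def filtSetoid {Agt : Type} (M : PreNDM Agt) (S : Set (Frm Agt)) : Setoid M.W where
  r := filtRel M S
  iseqv := ⟨fun _ _ _ => Iff.rfl, fun h φ hφ => (h φ hφ).symm,
    fun h1 h2 φ hφ => (h1 φ hφ).trans (h2 φ hφ)⟩

/-- The `≡_Σ`-equivalence class `|w|_Σ` of a world `w`. -/
def filtMk {Agt : Type} (M : PreNDM Agt) (S : Set (Frm Agt)) (w : M.W) :
    Quotient (filtSetoid M S) :=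
  Quotient.mk (filtSetoid M S) w

/-- Closure under subformulas. -/
def SubClosed {Agt : Type} (S : Set (Frm Agt)) : Prop :=
  (∀ φ : Frm Agt, Frm.neg φ ∈ S → φ ∈ S) ∧
  (∀ φ ψ : Frm Agt, Frm.and φ ψ ∈ S → φ ∈ S ∧ ψ ∈ S) ∧
  (∀ (i : Agt) (φ : Frm Agt), Frm.expbel i φ ∈ S → φ ∈ S) ∧
  (∀ (i : Agt) (φ : Frm Agt), Frm.impbel i φ ∈ S → φ ∈ S)

/-- The filtration `M_Σ = (W_Σ, D_Σ, N_Σ, V_Σ)` of `M` through `Σ`: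
`W_Σ` is the quotient of `W` by `≡_Σ`;
`D_Σ(i,|w|) = (∩_{v ∈ |w|} D(i,v)) ∩ Σ`;
`N_Σ(i,|w|) = {|v| : v ∈ N(i,w)}` (smallest filtration);
`V_Σ(p) = {|w| : (M,w) ⊨ p}` if `p` occurs in `Σ`, and `∅` otherwise. -/
def filtModel {Agt : Type} (M : PreNDM Agt) (S : Set (Frm Agt)) : PreNDM Agt where
  W := Quotient (filtSetoid M S)
  D := fun i x => {α | α ∈ S ∧ ∀ v : M.W, filtMk M S v = x → α ∈ M.D i v}
  N := fun i x => {y | ∃ w v : M.W, filtMk M S w = x ∧ filtMk M S v = y ∧ v ∈ M.N i w}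
  V := fun p =>
    {x | (∃ φ ∈ S, p ∈ φ.atomsOf) ∧ ∃ w : M.W, filtMk M S w = x ∧ M.sat w (Frm.atom p)}

/-- The language of Fagin & Halpern's logic of general awareness:
`bel` is implicit belief `B_i`, `aware` is awareness `A_i`, `expk` is explicit
belief `X_i`. -/
inductive LGA (Agt : Type) : Type
  | atom : ℕ → LGA Agt
  | neg : LGA Agt → LGA Agt
  | and : LGA Agt → LGA Agt → LGA Agt
  | bel : Agt → LGA Agt → LGA Agt
  | aware : Agt → LGA Agt → LGA Agt
  | expk : Agt → LGA Agt → LGA Agt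

/-- An awareness structure `(S, R_1,…,R_n, A_1,…,A_n, π)`. -/
structure AwStruct (Agt : Type) where
  S : Type
  R : Agt → S → S → Prop
  A : Agt → S → Set (LGA Agt)
  val : ℕ → Set S

namespace AwStruct

variable {Agt : Type}

/-- Truth in an awareness structure; `X_i φ` holds iff both `B_i φ` and `A_i φ` hold. -/
def sat (M : AwStruct Agt) : M.S → LGA Agt → Prop
  | s, .atom p => s ∈ M.val p
  | s, .neg φ => ¬ sat M s φ
  | s, .and φ ψ => sat M s φ ∧ sat M s ψ
  | s, .bel i φ => ∀ t, M.R i s t → sat M t φ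
  | s, .aware i φ => φ ∈ M.A i s
  | s, .expk i φ => (∀ t, M.R i s t → sat M t φ) ∧ φ ∈ M.A i s

/-- An awareness structure is serial iff every `R_i` is serial. -/
def serial (M : AwStruct Agt) : Prop := ∀ i s, ∃ t, M.R i s t

end AwStruct

/-- The translation `tr` from `L` to the language of general awareness. -/
def tr {Agt : Type} : Frm Agt → LGA Agt
  | .atom p => .atom p
  | .neg φ => .neg (tr φ)
  | .and φ ψ => .and (tr φ) (tr ψ)
  | .expbel i α => .expk i (tr α)
  | .impbel i φ => .bel i (tr φ)

end LDAPaper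

/-!
Soundness is an induction on derivations: seriality of the context validates D, and Int holds
because every `R i`-successor of a base satisfies that agent's explicit beliefs.

Completeness goes through a canonical model. If `φ` is not derivable, `{¬φ}` extends to a maximal
consistent set. Each maximal consistent set `w` gives a belief base: its explicit beliefs are the
`△ᵢα` in `w` that are subformulas of `φ`, and its valuation is the atoms of `φ` that lie in `w`.
Such bases alone do not pin down the canonical relation. Atoms can only name countably many
things, so they cannot name each world, but they can name each of the finitely many theories
`w ∩ subf φ`. So a fresh atom marks the theory of each base, and agent `i`'s base at `w` also
rules out, by the negation of that atom, every theory that is not reachable from `w`'s theory in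
the filtration of the canonical relation. Then `R i` between canonical bases is exactly that
filtration. Seriality of the canonical relation, which comes from D, makes the model a CMAB, and a
truth lemma for the subformulas of `φ` shows that `φ` fails in it.
-/

namespace LDAPaper

variable {Agt : Type}

namespace Frm

theorem isL_of_isL0 : ∀ {α : Frm Agt}, α.isL0 → α.isL
  | .atom _, _ => trivial
  | .neg α, h => isL_of_isL0 (α := α) h
  | .and _ _, h => ⟨isL_of_isL0 h.1, isL_of_isL0 h.2⟩
  | .expbel _ _, h => h
  | .impbel _ _, h => h.elim

theorem isL_imp {φ ψ : Frm Agt} : (φ.imp ψ).isL ↔ φ.isL ∧ ψ.isL := Iff.rfl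

end Frm

theorem isL_conjList_iff {l : List (Frm Agt)} : (conjList l).isL ↔ ∀ ψ ∈ l, ψ.isL := by
  induction l with
  | nil => simp [conjList, Frm.isL]
  | cons ψ l ih => simp [conjList, Frm.isL, ih]

@[simp, grind =] theorem boolEval_neg (v : Frm Agt → Bool) (φ : Frm Agt) :
    boolEval v φ.neg = !boolEval v φ := rfl

@[simp, grind =] theorem boolEval_and (v : Frm Agt → Bool) (φ ψ : Frm Agt) :
    boolEval v (φ.and ψ) = (boolEval v φ && boolEval v ψ) := rfl

@[simp, grind =] theorem boolEval_imp (v : Frm Agt → Bool) (φ ψ : Frm Agt) :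
    boolEval v (φ.imp ψ) = (!boolEval v φ || boolEval v ψ) := by
  simp [Frm.imp, boolEval]

theorem boolEval_conjList (v : Frm Agt → Bool) (l : List (Frm Agt)) :
    boolEval v (conjList l) = l.all (boolEval v) := by
  induction l with
  | nil => simp [conjList, boolEval]
  | cons ψ l ih => simp [conjList, ih]

namespace LDA

theorem isL {φ : Frm Agt} (h : LDA φ) : φ.isL := by
  induction h with
  | taut h _ => exact h
  | axK _ hφ hψ => exact ⟨⟨hφ, hφ, hψ⟩, hψ⟩
  | axD _ hφ => exact ⟨hφ, hφ⟩
  | axInt _ hα => exact Frm.isL_imp.2 ⟨hα, (Frm.isL_of_isL0 hα : Frm.isL _)⟩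
  | mp _ _ ih => exact ih.2
  | nec _ _ ih => exact ih

theorem of_taut_imp {φ ψ : Frm Agt} (h : LDA φ) (hψ : ψ.isL)
    (hv : ∀ v, boolEval v φ = true → boolEval v ψ = true) : LDA ψ :=
  mp (taut ⟨h.isL, hψ⟩ fun v => by grind) h

theorem of_taut_imp₂ {φ ψ χ : Frm Agt} (h₁ : LDA φ) (h₂ : LDA ψ) (hχ : χ.isL)
    (hv : ∀ v, boolEval v φ = true → boolEval v ψ = true → boolEval v χ = true) : LDA χ :=
  mp (mp (taut ⟨h₁.isL, h₂.isL, hχ⟩ fun v => by grind) h₁) h₂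

theorem conjList_nil : LDA (conjList ([] : List (Frm Agt))) :=
  taut ⟨trivial, trivial⟩ fun v => by simp [conjList, boolEval]

end LDA

theorem msat_imp {Cxt : Set (MABase Agt)} {b : MABase Agt} {ψ χ : Frm Agt} :
    msat Cxt b (ψ.imp χ) ↔ (msat Cxt b ψ → msat Cxt b χ) := by
  simp only [Frm.imp, msat]
  tauto

theorem msat_iff_bsat {Cxt : Set (MABase Agt)} {b : MABase Agt} :
    ∀ {α : Frm Agt}, α.isL0 → (msat Cxt b α ↔ b.bsat α)
  | .atom _, _ | .expbel _ _, _ => Iff.rfl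
  | .neg _, h => not_congr (msat_iff_bsat h)
  | .and _ _, h => and_congr (msat_iff_bsat h.1) (msat_iff_bsat h.2)
  | .impbel _ _, h => h.elim

theorem boolEval_iff_msat {Cxt : Set (MABase Agt)} {b : MABase Agt} {v : Frm Agt → Bool}
    (hv : ∀ ψ, v ψ = true ↔ msat Cxt b ψ) (φ : Frm Agt) :
    boolEval v φ = true ↔ msat Cxt b φ := by
  induction φ with
  | neg φ ih => simp [msat, ← ih]
  | and φ ψ ih₁ ih₂ => simp [msat, ih₁, ih₂]
  | _ => exact hv _

theorem isCMAB.of_mem {b b' : MABase Agt} {Cxt : Set (MABase Agt)} (hC : isCMAB b Cxt)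
    (hb' : b' ∈ Cxt) : isCMAB b' Cxt := by
  rw [isCMAB, Set.insert_eq_of_mem hb']
  exact ⟨fun c hc => hC.1 c (Set.mem_insert_of_mem _ hc),
    fun i c hc => hC.2 i c (Set.mem_insert_of_mem _ hc)⟩

theorem LDA.sound {φ : Frm Agt} (h : LDA φ) :
    ∀ (b : MABase Agt) (Cxt : Set (MABase Agt)), isCMAB b Cxt → msat Cxt b φ := by
  induction h with
  | taut _ htaut =>
    classical
    exact fun b Cxt _ => (boolEval_iff_msat (fun _ => decide_eq_true_iff) _).1 (htaut _)
  | axK =>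
    refine fun b Cxt _ => msat_imp.2 fun ⟨h₁, h₂⟩ b' hb' hR => ?_
    exact msat_imp.1 (h₂ b' hb' hR) (h₁ b' hb' hR)
  | axD i =>
    intro b Cxt hC ⟨h₁, h₂⟩
    obtain ⟨b', hb', hR⟩ := hC.2 i b (Set.mem_insert _ _)
    exact h₂ b' hb' hR (h₁ b' hb' hR)
  | axInt i hα =>
    exact fun b Cxt _ => msat_imp.2 fun hmem b' _ hR => (msat_iff_bsat hα).2 (hR _ hmem)
  | mp _ _ ih₁ ih₂ => exact fun b Cxt hC => msat_imp.1 (ih₁ b Cxt hC) (ih₂ b Cxt hC)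
  | nec i _ ih => exact fun b Cxt hC b' hb' _ => ih b' Cxt (hC.of_mem hb')

def Derives (Δ : Set (Frm Agt)) (χ : Frm Agt) : Prop :=
  ∃ l : List (Frm Agt), (∀ ψ ∈ l, ψ ∈ Δ) ∧ LDA ((conjList l).imp χ)

namespace Derives

variable {Δ : Set (Frm Agt)} {φ ψ χ : Frm Agt}

theorem isL (h : Derives Δ χ) : χ.isL := by
  obtain ⟨_, _, hl⟩ := h
  exact hl.isL.2

theorem of_LDA (h : LDA χ) : Derives Δ χ :=
  ⟨[], by simp, LDA.of_taut_imp h ⟨isL_conjList_iff.2 (by simp), h.isL⟩ fun v => by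
    simp [boolEval_conjList]⟩

theorem of_mem (h : ψ ∈ Δ) (hψ : ψ.isL) : Derives Δ ψ :=
  ⟨[ψ], by simpa using h, LDA.taut ⟨isL_conjList_iff.2 (by simpa using hψ), hψ⟩ fun v => by
    simp [boolEval_conjList]⟩

theorem of_taut_imp (h : Derives Δ φ) (hψ : ψ.isL)
    (hv : ∀ v, boolEval v φ = true → boolEval v ψ = true) : Derives Δ ψ := by
  obtain ⟨l, hlΔ, hl⟩ := h
  exact ⟨l, hlΔ, hl.of_taut_imp ⟨hl.isL.1, hψ⟩ fun v => by grind⟩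

theorem and (h₁ : Derives Δ φ) (h₂ : Derives Δ ψ) : Derives Δ (φ.and ψ) := by
  obtain ⟨l₁, hl₁Δ, hl₁⟩ := h₁
  obtain ⟨l₂, hl₂Δ, hl₂⟩ := h₂
  have hL : ∀ ψ ∈ l₁ ++ l₂, ψ.isL := by
    simpa [or_imp, forall_and] using
      ⟨isL_conjList_iff.1 hl₁.isL.1, isL_conjList_iff.1 hl₂.isL.1⟩
  refine ⟨l₁ ++ l₂, by simpa [or_imp, forall_and] using ⟨hl₁Δ, hl₂Δ⟩,
    LDA.of_taut_imp₂ hl₁ hl₂ ⟨isL_conjList_iff.2 hL, hl₁.isL.2, hl₂.isL.2⟩ fun v => ?_⟩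
  simp only [boolEval_imp, boolEval_and, boolEval_conjList, List.all_append]
  grind

theorem mp (h₁ : Derives Δ (φ.imp ψ)) (h₂ : Derives Δ φ) : Derives Δ ψ :=
  (h₁.and h₂).of_taut_imp h₁.isL.2 fun v => by grind

end Derives

theorem Consistent.not_derives_neg {Δ : Set (Frm Agt)} {χ : Frm Agt} (hΔ : Consistent Δ)
    (h : Derives Δ χ) : ¬Derives Δ χ.neg := fun hn => by
  obtain ⟨l, hlΔ, hl⟩ := h.and hn
  exact hΔ l hlΔ (hl.of_taut_imp hl.isL.1 fun v => by simp)

theorem derives_neg_of_not_consistent_insert {Δ : Set (Frm Agt)} {χ : Frm Agt} (hχ : χ.isL)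
    (h : ¬Consistent (insert χ Δ)) : Derives Δ χ.neg := by
  classical
  simp only [Consistent, not_forall, not_not] at h
  obtain ⟨l, hl, hneg⟩ := h
  have hlL := isL_conjList_iff.1 hneg.isL
  refine ⟨l.filter (· ≠ χ), fun ψ hψ => ?_, hneg.of_taut_imp ⟨?_, hχ⟩ fun v hv => ?_⟩
  · simp only [List.mem_filter, decide_eq_true_eq] at hψ
    exact (hl ψ hψ.1).resolve_left hψ.2
  · exact isL_conjList_iff.2 fun ψ hψ => hlL ψ (List.mem_of_mem_filter hψ)
  · simp only [boolEval_neg, boolEval_imp, boolEval_conjList] at hv ⊢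
    grind

namespace MCS

variable {Γ : Set (Frm Agt)} {ψ χ : Frm Agt}

theorem mem_of_consistent_insert (hΓ : MCS Γ) (hχ : χ.isL) (h : Consistent (insert χ Γ)) :
    χ ∈ Γ :=
  hΓ.2.2 _ (Set.forall_mem_insert.2 ⟨hχ, hΓ.1⟩) h (Set.subset_insert _ _) ▸ Set.mem_insert _ _

theorem mem_of_derives (hΓ : MCS Γ) (h : Derives Γ χ) : χ ∈ Γ :=
  hΓ.mem_of_consistent_insert h.isL <| Classical.byContradiction fun hc =>
    hΓ.2.1.not_derives_neg h (derives_neg_of_not_consistent_insert h.isL hc)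

theorem neg_mem_iff (hΓ : MCS Γ) (hψ : ψ.isL) : ψ.neg ∈ Γ ↔ ψ ∉ Γ :=
  ⟨fun hn hp => hΓ.2.1.not_derives_neg (.of_mem hp hψ) (.of_mem hn hψ), fun hp =>
    hΓ.mem_of_derives <| derives_neg_of_not_consistent_insert hψ fun hc =>
      hp (hΓ.mem_of_consistent_insert hψ hc)⟩

theorem and_mem_iff (hΓ : MCS Γ) : ψ.and χ ∈ Γ ↔ ψ ∈ Γ ∧ χ ∈ Γ := by
  constructor
  · intro h
    have hL : (ψ.and χ).isL := hΓ.1 _ h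
    have hd := Derives.of_mem h hL
    exact ⟨hΓ.mem_of_derives (hd.of_taut_imp hL.1 fun v => by simp_all),
      hΓ.mem_of_derives (hd.of_taut_imp hL.2 fun v => by simp_all)⟩
  · rintro ⟨h₁, h₂⟩
    exact hΓ.mem_of_derives ((Derives.of_mem h₁ (hΓ.1 _ h₁)).and (.of_mem h₂ (hΓ.1 _ h₂)))

end MCS

theorem exists_MCS_superset {Δ : Set (Frm Agt)} (hΔL : ∀ ψ ∈ Δ, ψ.isL) (hΔ : Consistent Δ) :
    ∃ Γ, MCS Γ ∧ Δ ⊆ Γ := by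
  let S : Set (Set (Frm Agt)) := {Γ | (∀ ψ ∈ Γ, ψ.isL) ∧ Consistent Γ}
  have hchain : ∀ c ⊆ S, IsChain (· ⊆ ·) c → c.Nonempty → ∃ ub ∈ S, ∀ Γ ∈ c, Γ ⊆ ub := by
    refine fun c hc hchain hne => ⟨⋃₀ c, ⟨fun ψ ⟨Γ, hΓc, hψ⟩ => (hc hΓc).1 ψ hψ, fun l hl => ?_⟩,
      fun _ => Set.subset_sUnion_of_mem⟩
    obtain ⟨Γ, hΓc, hlΓ⟩ :=
      hchain.directedOn.exists_mem_subset_of_finite_of_subset_sUnion hne l.finite_toSet hl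
    exact (hc hΓc).2 l hlΓ
  obtain ⟨Γ, hΔΓ, hmax⟩ := zorn_subset_nonempty S hchain Δ ⟨hΔL, hΔ⟩
  exact ⟨Γ, ⟨hmax.prop.1, hmax.prop.2, fun Δ' hL hc hsub =>
    (hmax.eq_of_subset ⟨hL, hc⟩ hsub).symm⟩, hΔΓ⟩

theorem LDA.conjList_map_impbel (i : Agt) {l : List (Frm Agt)} {χ : Frm Agt}
    (h : LDA ((conjList l).imp χ)) :
    LDA ((conjList (l.map (Frm.impbel i))).imp (Frm.impbel i χ)) := by
  induction l generalizing χ with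
  | nil =>
    exact LDA.of_taut_imp ((h.mp LDA.conjList_nil).nec i) ⟨LDA.conjList_nil.isL, h.isL.2⟩
      fun v => by simp [conjList]
  | cons ψ l ih =>
    obtain ⟨⟨hψ, hl⟩, hχ⟩ := Frm.isL_imp.1 h.isL
    have hcurry : LDA ((conjList l).imp (ψ.imp χ)) :=
      h.of_taut_imp ⟨hl, hψ, hχ⟩ fun v => by grind [conjList]
    have hlbox : (conjList (l.map (Frm.impbel i))).isL := (ih hcurry).isL.1
    exact LDA.of_taut_imp₂ (ih hcurry) (LDA.axK i hψ hχ) ⟨⟨hψ, hlbox⟩, hχ⟩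
      fun v => by grind [conjList]

theorem Derives.impbel (i : Agt) {Δ : Set (Frm Agt)} {χ : Frm Agt}
    (h : Derives {ψ | Frm.impbel i ψ ∈ Δ} χ) : Derives Δ (Frm.impbel i χ) := by
  obtain ⟨l, hlΔ, hl⟩ := h
  exact ⟨l.map (Frm.impbel i), by simpa using hlΔ, hl.conjList_map_impbel i⟩

theorem exists_mem_canonN_not_mem {i : Agt} {u : (canonM Agt).W} {χ : Frm Agt} (hχ : χ.isL)
    (h : Frm.impbel i χ ∉ u.val) : ∃ v ∈ canonN i u, χ ∉ v.val := by
  have hcons : Consistent (insert χ.neg {ψ | Frm.impbel i ψ ∈ u.val}) := by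
    by_contra hc
    have hχ' : Derives {ψ | Frm.impbel i ψ ∈ u.val} χ :=
      (derives_neg_of_not_consistent_insert (χ := χ.neg) hχ hc).of_taut_imp hχ fun v => by simp
    exact h (u.2.mem_of_derives (hχ'.impbel i))
  have hL : ∀ ψ ∈ insert χ.neg {ψ | Frm.impbel i ψ ∈ u.val}, ψ.isL :=
    Set.forall_mem_insert.2 ⟨hχ, fun ψ hψ => u.2.1 (Frm.impbel i ψ) hψ⟩
  obtain ⟨Γ, hΓ, hsub⟩ := exists_MCS_superset hL hcons
  exact ⟨⟨Γ, hΓ⟩, fun ψ hψ => hsub (Set.mem_insert_of_mem _ hψ),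
    (hΓ.neg_mem_iff hχ).1 (hsub (Set.mem_insert _ _))⟩

theorem canonN_nonempty (i : Agt) (u : (canonM Agt).W) : (canonN i u).Nonempty := by
  have htop := LDA.conjList_nil (Agt := Agt)
  have hbot : Frm.impbel i (conjList []).neg ∉ u.val := fun hbot =>
    u.2.2.1.not_derives_neg ((Derives.of_LDA (htop.nec i)).and (.of_mem hbot htop.isL))
      (.of_LDA (LDA.axD i htop.isL))
  obtain ⟨v, hv, -⟩ := exists_mem_canonN_not_mem (χ := (conjList []).neg) htop.isL hbot
  exact ⟨v, hv⟩

section Filtration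

open Classical

noncomputable def subf : Frm Agt → Finset (Frm Agt)
  | .atom p => {.atom p}
  | .neg ψ => insert ψ.neg (subf ψ)
  | .and ψ χ => insert (ψ.and χ) (subf ψ ∪ subf χ)
  | .expbel i α => insert (.expbel i α) (subf α)
  | .impbel i ψ => insert (.impbel i ψ) (subf ψ)

theorem mem_subf_self (φ : Frm Agt) : φ ∈ subf φ := by
  cases φ <;> simp [subf]

theorem subf_subset_of_mem {φ ψ : Frm Agt} (h : ψ ∈ subf φ) : subf ψ ⊆ subf φ := by
  induction φ with
  | atom p => rw [Finset.mem_singleton.1 h]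
  | neg φ ih | expbel _ φ ih | impbel _ φ ih =>
    rcases Finset.mem_insert.1 h with rfl | h
    exacts [subset_rfl, (ih h).trans (Finset.subset_insert _ _)]
  | and φ₁ φ₂ ih₁ ih₂ =>
    rcases Finset.mem_insert.1 h with rfl | h
    · rfl
    rcases Finset.mem_union.1 h with h | h
    exacts [(ih₁ h).trans (Finset.subset_union_left.trans (Finset.subset_insert _ _)),
      (ih₂ h).trans (Finset.subset_union_right.trans (Finset.subset_insert _ _))]

theorem subClosed_subf (φ : Frm Agt) : SubClosed (subf φ : Set (Frm Agt)) := by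
  refine ⟨fun ψ h => ?_, fun ψ χ h => ⟨?_, ?_⟩, fun i ψ h => ?_, fun i ψ h => ?_⟩ <;>
    exact subf_subset_of_mem h (by simp [subf, mem_subf_self])

theorem isL0_of_mem_subf {φ : Frm Agt} (hφ : φ.isL0) : ∀ ψ ∈ subf φ, ψ.isL0 := by
  intro ψ h
  induction φ <;>
    simp only [subf, Finset.mem_insert, Finset.mem_union, Finset.mem_singleton] at h <;>
    aesop (add simp Frm.isL0)

theorem isL_of_mem_subf {φ : Frm Agt} (hφ : φ.isL) : ∀ ψ ∈ subf φ, ψ.isL := by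
  intro ψ h
  induction φ with
  | expbel i α =>
    rcases Finset.mem_insert.1 h with rfl | h
    exacts [hφ, Frm.isL_of_isL0 (isL0_of_mem_subf hφ ψ h)]
  | _ =>
    simp only [subf, Finset.mem_insert, Finset.mem_union, Finset.mem_singleton] at h
    aesop (add simp Frm.isL)

variable (S : Finset (Frm Agt))

noncomputable def theory (w : (canonM Agt).W) : Finset (Frm Agt) := S.filter (· ∈ w.val)

def atomBound : Frm Agt → ℕ
  | .atom p => p + 1
  | _ => 0

noncomputable def theoryAtom (t : Finset (Frm Agt)) : ℕ :=
  S.sup atomBound + S.powerset.toList.idxOf t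

def FiltAcc (i : Agt) (u v : (canonM Agt).W) : Prop :=
  ∃ u' v', theory S u' = theory S u ∧ theory S v' = theory S v ∧ v' ∈ canonN i u'

/- `theoryAtom S t` is a fresh atom naming the `S`-theory `t`; the second part of `B i` makes
`R i` between canonical bases coincide with `FiltAcc S i`. -/
noncomputable def canonBase (w : (canonM Agt).W) : MABase Agt where
  B i := {α | Frm.expbel i α ∈ S ∧ Frm.expbel i α ∈ w.val} ∪
    {β | ∃ v, ¬FiltAcc S i w v ∧ β = (Frm.atom (theoryAtom S (theory S v))).neg}
  V := {p | Frm.atom p ∈ S ∧ Frm.atom p ∈ w.val} ∪ {theoryAtom S (theory S w)}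

noncomputable def canonCxt : Set (MABase Agt) := Set.range (canonBase S)

variable {S}

theorem mem_theory {w : (canonM Agt).W} {ψ : Frm Agt} : ψ ∈ theory S w ↔ ψ ∈ S ∧ ψ ∈ w.val :=
  Finset.mem_filter

theorem atom_theoryAtom_not_mem (t : Finset (Frm Agt)) : Frm.atom (theoryAtom S t) ∉ S :=
  fun h => by
    have := Finset.le_sup (f := atomBound) h
    simp only [atomBound, theoryAtom] at this
    omega

theorem theoryAtom_theory_inj {u v : (canonM Agt).W}
    (h : theoryAtom S (theory S u) = theoryAtom S (theory S v)) : theory S u = theory S v :=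
  (List.idxOf_inj (Finset.mem_toList.2 (Finset.mem_powerset.2 (Finset.filter_subset _ _)))).1
    (Nat.add_left_cancel h)

theorem mem_canonBase_V_iff {p : ℕ} (hp : Frm.atom p ∈ S) {w : (canonM Agt).W} :
    p ∈ (canonBase S w).V ↔ Frm.atom p ∈ w.val := by
  refine ⟨?_, fun h => Or.inl ⟨hp, h⟩⟩
  rintro (⟨-, h⟩ | rfl)
  · exact h
  · exact absurd hp (atom_theoryAtom_not_mem _)

theorem theoryAtom_mem_canonBase_V_iff {u w : (canonM Agt).W} :
    theoryAtom S (theory S u) ∈ (canonBase S w).V ↔ theory S u = theory S w := by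
  refine ⟨?_, fun h => Or.inr (h ▸ rfl)⟩
  rintro (⟨h, -⟩ | h)
  · exact absurd h (atom_theoryAtom_not_mem _)
  · exact theoryAtom_theory_inj h

theorem mem_of_theory_eq {u v : (canonM Agt).W} (h : theory S u = theory S v) {ψ : Frm Agt}
    (hψ : ψ ∈ S) (hu : ψ ∈ u.val) : ψ ∈ v.val :=
  (mem_theory.1 (h ▸ mem_theory.2 ⟨hψ, hu⟩)).2

theorem bsat_canonBase_iff (hS : SubClosed (S : Set (Frm Agt))) {α : Frm Agt} (hα : α.isL0)
    (hαS : α ∈ S) (w : (canonM Agt).W) :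
    (canonBase S w).bsat α ↔ α ∈ w.val := by
  induction α with
  | atom p => exact mem_canonBase_V_iff hαS
  | neg α ih =>
    exact (not_congr (ih hα (hS.1 _ hαS))).trans
      (w.2.neg_mem_iff (ψ := α) (Frm.isL_of_isL0 hα)).symm
  | and α β ih₁ ih₂ =>
    obtain ⟨hαS', hβS⟩ := hS.2.1 _ _ hαS
    exact (and_congr (ih₁ hα.1 hαS') (ih₂ hα.2 hβS)).trans w.2.and_mem_iff.symm
  | expbel i α =>
    refine ⟨?_, fun h => Or.inl ⟨hαS, h⟩⟩
    rintro (⟨-, h⟩ | ⟨v, -, rfl⟩)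
    · exact h
    · exact absurd (hS.1 _ (hS.2.2.1 _ _ hαS)) (atom_theoryAtom_not_mem _)
  | impbel => exact hα.elim

theorem R_canonBase_of_mem_canonN (hS : SubClosed (S : Set (Frm Agt)))
    (hSL : ∀ ψ ∈ S, ψ.isL) {i : Agt} {u v : (canonM Agt).W} (h : v ∈ canonN i u) :
    MABase.R i (canonBase S u) (canonBase S v) := by
  rintro α (⟨hαS, hα⟩ | ⟨v', hnacc, rfl⟩)
  · have hα0 : α.isL0 := hSL _ hαS
    have hbox : Frm.impbel i α ∈ u.val :=
      u.2.mem_of_derives ((Derives.of_LDA (LDA.axInt i hα0)).mp (.of_mem hα hα0))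
    exact (bsat_canonBase_iff hS hα0 (hS.2.2.1 _ _ hαS) v).2 (h α hbox)
  · exact fun hmem => hnacc ⟨u, v, rfl, (theoryAtom_mem_canonBase_V_iff.1 hmem).symm, h⟩

theorem filtAcc_of_R {i : Agt} {u v : (canonM Agt).W}
    (h : MABase.R i (canonBase S u) (canonBase S v)) : FiltAcc S i u v :=
  Classical.byContradiction fun hn =>
    h _ (Or.inr ⟨v, hn, rfl⟩) (theoryAtom_mem_canonBase_V_iff.2 rfl)

theorem isCMAB_canonBase (hS : SubClosed (S : Set (Frm Agt)))
    (hSL : ∀ ψ ∈ S, ψ.isL) (w : (canonM Agt).W) : isCMAB (canonBase S w) (canonCxt S) := by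
  rw [isCMAB, Set.insert_eq_of_mem (show canonBase S w ∈ canonCxt S from ⟨w, rfl⟩)]
  refine ⟨?_, fun i => ?_⟩
  · rintro _ ⟨u, rfl⟩ i α (⟨hαS, -⟩ | ⟨v, -, rfl⟩)
    exacts [hSL _ hαS, trivial]
  · rintro _ ⟨u, rfl⟩
    obtain ⟨v, hv⟩ := canonN_nonempty i u
    exact ⟨_, ⟨v, rfl⟩, R_canonBase_of_mem_canonN hS hSL hv⟩

theorem msat_canonBase_iff (hS : SubClosed (S : Set (Frm Agt)))
    (hSL : ∀ ψ ∈ S, ψ.isL) {ψ : Frm Agt} (hψS : ψ ∈ S) (w : (canonM Agt).W) :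
    msat (canonCxt S) (canonBase S w) ψ ↔ ψ ∈ w.val := by
  induction ψ generalizing w with
  | atom p => exact mem_canonBase_V_iff hψS
  | neg ψ ih =>
    exact (not_congr (ih (hS.1 _ hψS) w)).trans (w.2.neg_mem_iff (hSL _ (hS.1 _ hψS))).symm
  | and ψ χ ih₁ ih₂ =>
    obtain ⟨hψS', hχS⟩ := hS.2.1 _ _ hψS
    exact (and_congr (ih₁ hψS' w) (ih₂ hχS w)).trans w.2.and_mem_iff.symm
  | expbel i α => exact bsat_canonBase_iff (α := .expbel i α) hS (hSL _ hψS) hψS w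
  | impbel i χ ih =>
    have hχS := hS.2.2.2 _ _ hψS
    constructor
    · intro h
      by_contra hχ
      obtain ⟨v, hv, hχv⟩ := exists_mem_canonN_not_mem (hSL _ hχS) hχ
      exact hχv ((ih hχS v).1 (h _ ⟨v, rfl⟩ (R_canonBase_of_mem_canonN hS hSL hv)))
    · rintro h _ ⟨v, rfl⟩ hR
      obtain ⟨u', v', hu, hv, hu'v'⟩ := filtAcc_of_R hR
      exact (ih hχS v).2 (mem_of_theory_eq hv hχS (hu'v' χ (mem_of_theory_eq hu.symm hψS h)))

end Filtration

theorem LDA.of_forall_MCS_mem {φ : Frm Agt} (hφ : φ.isL) (h : ∀ Γ, MCS Γ → φ ∈ Γ) : LDA φ := by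
  by_contra hnd
  have hcons : Consistent (insert φ.neg ∅) := Classical.byContradiction fun hc => hnd <| by
    obtain ⟨l, hl, hlφ⟩ := derives_neg_of_not_consistent_insert (χ := φ.neg) hφ hc
    obtain rfl : l = [] := List.eq_nil_iff_forall_not_mem.2 hl
    exact LDA.of_taut_imp₂ LDA.conjList_nil hlφ hφ fun v => by simp [conjList]
  obtain ⟨Γ, hΓ, hsub⟩ := exists_MCS_superset (by simpa [Frm.isL] using hφ) hcons
  exact (hΓ.neg_mem_iff hφ).1 (hsub (Set.mem_insert _ _)) (h Γ hΓ)

theorem soundness_completeness_cmab_general (Agt : Type) (φ : Frm Agt)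
    (hφ : φ.isL) :
    LDA φ ↔ ∀ (b : MABase Agt) (Cxt : Set (MABase Agt)), isCMAB b Cxt → msat Cxt b φ := by
  refine ⟨LDA.sound, fun hvalid => LDA.of_forall_MCS_mem hφ fun Γ hΓ => ?_⟩
  have hS := subClosed_subf φ
  have hSL := isL_of_mem_subf hφ
  exact (msat_canonBase_iff hS hSL (mem_subf_self φ) ⟨Γ, hΓ⟩).1
    (hvalid _ _ (isCMAB_canonBase hS hSL ⟨Γ, hΓ⟩))

/-- **Soundness and completeness for CMABs.** A formula `φ ∈ L` is derivable in LDA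
iff `φ` is valid for the class of consistent multi-agent belief models. -/
theorem soundness_completeness_cmab (Agt : Type) [Fintype Agt] (φ : Frm Agt)
    (hφ : φ.isL) :
    LDA φ ↔ ∀ (b : MABase Agt) (Cxt : Set (MABase Agt)), isCMAB b Cxt → msat Cxt b φ :=
  soundness_completeness_cmab_general Agt φ hφ

end LDAPaper
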